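/- Consider the polynomial parametrization of the Enneper minimal surface x(u, v) = (v(−3u² + v² + 3), u(u² − 3v² + 3), 6uv) : ℝ² → ℝ³. There exist a center M = (u0, v0) and an offset δ = (α, β) such that the two diagonals d1(t) = M + t(α, β) and d2(t) = M + t(−α, β), t ∈ [−1, 1], have different energies on the surface: ∫_{-1}^{1} |d/dt [x(d1(t))]|² dt ≠ ∫_{-1}^{1} |d/dt [x(d2(t))]|² dt. -/

import Mathlib

/-!
The polynomial Enneper parametrization is isothermal with conformal factor `9 (1 + u² + v²)²`,
so the energy of the segment `t ↦ (u₀ + tα, v₀ + tβ)`, `t ∈ [-1, 1]`, is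
`9 (α² + β²) ∫ (a + b t + c t²)² dt` with `a = 1 + u₀² + v₀²`, `b = 2 (u₀α + v₀β)`, `c = α² + β²`.
Integrating over the symmetric interval kills the odd terms, and the only remaining term that
changes under `α ↦ -α` is `b²`. The two diagonals therefore differ in energy by
`96 (α² + β²) u₀ v₀ α β`, which is nonzero for `u₀ = v₀ = α = β = 1`.
-/

open intervalIntegral

theorem HasDerivAt.piLp_toLp {ι : Type*} [Fintype ι] (p : ENNReal) [Fact (1 ≤ p)]
    {f : ℝ → ι → ℝ} {f' : ι → ℝ} {t : ℝ} (h : HasDerivAt f f' t) :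
    HasDerivAt (fun s => WithLp.toLp p (f s)) (WithLp.toLp p f') t :=
  (PiLp.hasFDerivAt_toLp p (f t)).comp_hasDerivAt t h

theorem HasDerivAt.euclideanSpace_fin_three {a b c : ℝ → ℝ} {a' b' c' t : ℝ}
    (ha : HasDerivAt a a' t) (hb : HasDerivAt b b' t) (hc : HasDerivAt c c' t) :
    HasDerivAt (fun s => !₂[a s, b s, c s]) !₂[a', b', c'] t := by
  refine HasDerivAt.piLp_toLp 2 (hasDerivAt_pi.2 fun i => ?_)
  fin_cases i
  exacts [ha, hb, hc]

theorem norm_sq_euclideanSpace_fin_three (a b c : ℝ) :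
    ‖!₂[a, b, c]‖ ^ 2 = a ^ 2 + b ^ 2 + c ^ 2 := by
  simp [EuclideanSpace.real_norm_sq_eq, Fin.sum_univ_three]

theorem integral_sq_quadratic (a b c : ℝ) :
    ∫ t in (-1 : ℝ)..1, (a + b * t + c * t ^ 2) ^ 2
      = 2 * a ^ 2 + 2 / 3 * (b ^ 2 + 2 * a * c) + 2 / 5 * c ^ 2 := by
  have hexpand : ∀ t : ℝ, (a + b * t + c * t ^ 2) ^ 2 = a ^ 2 + 2 * a * b * t ^ 1
      + (b ^ 2 + 2 * a * c) * t ^ 2 + 2 * b * c * t ^ 3 + c ^ 2 * t ^ 4 :=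
    fun t => by ring
  simp_rw [hexpand]
  rw [integral_add, integral_add, integral_add, integral_add]
  · simp only [integral_const_mul, integral_pow, integral_const]
    rw [smul_eq_mul]
    push_cast
    ring
  all_goals exact Continuous.intervalIntegrable (by fun_prop) _ _

noncomputable def segmentEnergy {E : Type*} [NormedAddCommGroup E] [NormedSpace ℝ E]
    (x : ℝ → ℝ → E) (u₀ v₀ α β : ℝ) : ℝ :=
  ∫ t in (-1 : ℝ)..1, ‖deriv (fun s => x (u₀ + s * α) (v₀ + s * β)) t‖ ^ 2

theorem segmentEnergy_neg_fst {E : Type*} [NormedAddCommGroup E] [NormedSpace ℝ E]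
    (x : ℝ → ℝ → E) (u₀ v₀ α β : ℝ) :
    segmentEnergy x u₀ v₀ (-α) β
      = ∫ t in (-1 : ℝ)..1, ‖deriv (fun s => x (u₀ - s * α) (v₀ + s * β)) t‖ ^ 2 := by
  simp only [segmentEnergy, mul_neg, ← sub_eq_add_neg]

def enneper (u v : ℝ) : EuclideanSpace ℝ (Fin 3) :=
  !₂[v * (-3 * u ^ 2 + v ^ 2 + 3), u * (u ^ 2 - 3 * v ^ 2 + 3), 6 * u * v]

def enneperDeriv (u v a b : ℝ) : EuclideanSpace ℝ (Fin 3) :=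
  !₂[-6 * u * v * a + (-3 * u ^ 2 + 3 * v ^ 2 + 3) * b,
    (3 * u ^ 2 - 3 * v ^ 2 + 3) * a - 6 * u * v * b, 6 * v * a + 6 * u * b]

theorem hasDerivAt_enneper_comp {u v : ℝ → ℝ} {u' v' t : ℝ} (hu : HasDerivAt u u' t)
    (hv : HasDerivAt v v' t) :
    HasDerivAt (fun s => enneper (u s) (v s)) (enneperDeriv (u t) (v t) u' v') t := by
  apply HasDerivAt.euclideanSpace_fin_three
  · exact (hv.mul ((((hu.pow 2).const_mul (-3)).add (hv.pow 2)).add_const 3)).congr_deriv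
      (by simp only [Pi.add_apply, Pi.pow_apply]; ring)
  · exact (hu.mul (((hu.pow 2).sub ((hv.pow 2).const_mul 3)).add_const 3)).congr_deriv
      (by simp only [Pi.sub_apply, Pi.pow_apply]; ring)
  · exact ((hu.const_mul 6).mul hv).congr_deriv (by ring)

theorem norm_enneperDeriv_sq (u v a b : ℝ) :
    ‖enneperDeriv u v a b‖ ^ 2 = 9 * (1 + u ^ 2 + v ^ 2) ^ 2 * (a ^ 2 + b ^ 2) := by
  rw [enneperDeriv, norm_sq_euclideanSpace_fin_three]
  ring

theorem segmentEnergy_enneper (u₀ v₀ α β : ℝ) :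
    segmentEnergy enneper u₀ v₀ α β
      = 9 * (α ^ 2 + β ^ 2) * ∫ t in (-1 : ℝ)..1, (1 + (u₀ + t * α) ^ 2 + (v₀ + t * β) ^ 2) ^ 2 := by
  have hspeed : ∀ t : ℝ, ‖deriv (fun s => enneper (u₀ + s * α) (v₀ + s * β)) t‖ ^ 2
      = 9 * (α ^ 2 + β ^ 2) * (1 + (u₀ + t * α) ^ 2 + (v₀ + t * β) ^ 2) ^ 2 := fun t => by
    rw [(hasDerivAt_enneper_comp ((hasDerivAt_mul_const α).const_add u₀)
      ((hasDerivAt_mul_const β).const_add v₀)).deriv, norm_enneperDeriv_sq]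
    ring
  simp only [segmentEnergy, hspeed, integral_const_mul]

theorem segmentEnergy_enneper_sub_neg_fst (u₀ v₀ α β : ℝ) :
    segmentEnergy enneper u₀ v₀ α β - segmentEnergy enneper u₀ v₀ (-α) β
      = 96 * (α ^ 2 + β ^ 2) * (u₀ * v₀ * α * β) := by
  have hquadratic : ∀ α' : ℝ, (fun t : ℝ => (1 + (u₀ + t * α') ^ 2 + (v₀ + t * β) ^ 2) ^ 2)
      = fun t => ((1 + u₀ ^ 2 + v₀ ^ 2) + 2 * (u₀ * α' + v₀ * β) * t
        + (α' ^ 2 + β ^ 2) * t ^ 2) ^ 2 :=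
    fun α' => funext fun t => by ring
  simp only [segmentEnergy_enneper, hquadratic, integral_sq_quadratic]
  ring

/-- For the polynomial parametrization of the Enneper minimal surface there is
a parameter-line rectangle whose two diagonals have different energies on the
surface (the line element is isothermal but not Liouville). -/
theorem enneper_polynomial_diagonals_different_energy :
    let x : ℝ → ℝ → EuclideanSpace ℝ (Fin 3) := fun u v =>
      !₂[v * (-3 * u ^ 2 + v ^ 2 + 3), u * (u ^ 2 - 3 * v ^ 2 + 3), 6 * u * v]
    ∃ u0 v0 α β : ℝ,
      (∫ t in (-1:ℝ)..1,
          ‖deriv (fun s => x (u0 + s * α) (v0 + s * β)) t‖ ^ 2) ≠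
      (∫ t in (-1:ℝ)..1,
          ‖deriv (fun s => x (u0 - s * α) (v0 + s * β)) t‖ ^ 2) := by
  intro x
  refine ⟨1, 1, 1, 1, ?_⟩
  rw [← segmentEnergy_neg_fst, ← sub_ne_zero]
  change segmentEnergy enneper 1 1 1 1 - segmentEnergy enneper 1 1 (-1) 1 ≠ 0
  rw [segmentEnergy_enneper_sub_neg_fst]
  norm_num
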